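/- For the three-step coin sequence (H, H, 1) (Hadamard, Hadamard, identity) in a discrete-time quantum walk starting at position 0, the final reduced coin state equals I/2 for every initial pure coin state cos(θ/2)|0⟩ + e^{iφ} sin(θ/2)|1⟩; equivalently, the von Neumann entanglement entropy of the walker–coin state after step 3 equals 1 for all θ, φ. -/

import Mathlib

open Matrix

abbrev WState := Fin 2 → ℤ → ℂ

def shiftOp (ψ : WState) : WState :=
  fun c x => if c = 0 then ψ 0 (x - 1) else ψ 1 (x + 1)

noncomputable def coinOp (C : Matrix (Fin 2) (Fin 2) ℂ) (ψ : WState) : WState :=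
  fun c x => ∑ c' : Fin 2, C c c' * ψ c' x

noncomputable def Had : Matrix (Fin 2) (Fin 2) ℂ :=
  (1 / Real.sqrt 2 : ℝ) • !![1, 1; 1, -1]

/-- Initial state `(cos(θ/2)|0⟩ + e^{iφ} sin(θ/2)|1⟩) ⊗ |0⟩`. -/
noncomputable def initState (θ φ : ℝ) : WState :=
  fun c x => if x = 0 then
    (if c = 0 then (Real.cos (θ / 2) : ℂ)
     else Complex.exp (Complex.I * φ) * (Real.sin (θ / 2) : ℂ)) else 0


/-!
The first Hadamard step sends `(a, b)` at the origin to `(a + b)/√2` at `1` (coin 0) and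
`(a - b)/√2` at `-1` (coin 1); the second one splits these again, and the identity step only
shifts. The final amplitudes `±(a ± b)/2` thus occupy four distinct sites, coin 0 at `3, 1` and
coin 1 at `-1, -3`. Disjoint supports kill the off-diagonal entries of the reduced coin state, and
by the parallelogram law each diagonal entry is `(|a + b|² + |a - b|²)/4 = (|a|² + |b|²)/2 = 1/2`.
-/

open ComplexConjugate

@[simp] lemma shiftOp_apply_zero (ψ : WState) (x : ℤ) : shiftOp ψ 0 x = ψ 0 (x - 1) := rfl

@[simp] lemma shiftOp_apply_one (ψ : WState) (x : ℤ) : shiftOp ψ 1 x = ψ 1 (x + 1) := rfl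

lemma coinOp_apply (C : Matrix (Fin 2) (Fin 2) ℂ) (ψ : WState) (c : Fin 2) (x : ℤ) :
    coinOp C ψ c x = C c 0 * ψ 0 x + C c 1 * ψ 1 x :=
  Fin.sum_univ_two _

@[simp] lemma coinOp_one (ψ : WState) : coinOp 1 ψ = ψ := by
  ext c x
  fin_cases c <;> simp [coinOp_apply]

lemma Had_eq : Had = ((Real.sqrt 2 : ℂ))⁻¹ • !![1, 1; 1, -1] := by
  ext i j
  simp [Had, Matrix.smul_apply]

lemma inv_sqrt_two_mul_self : ((Real.sqrt 2 : ℂ))⁻¹ * ((Real.sqrt 2 : ℂ))⁻¹ = 1 / 2 := by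
  rw [← mul_inv, ← Complex.ofReal_mul, Real.mul_self_sqrt zero_le_two]
  norm_num

def atOrigin (v : Fin 2 → ℂ) : WState := fun c x => if x = 0 then v c else 0

noncomputable def walkStep (C : Matrix (Fin 2) (Fin 2) ℂ) (ψ : WState) : WState :=
  shiftOp (coinOp C ψ)

/-- The partial trace of `|ψ⟩⟨ψ|` over the walker's position. -/
noncomputable def reducedCoinState (ψ : WState) : Matrix (Fin 2) (Fin 2) ℂ :=
  fun c c' => ∑' x, ψ c x * conj (ψ c' x)

lemma walkStep_one_Had_Had_atOrigin (v : Fin 2 → ℂ) :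
    walkStep 1 (walkStep Had (walkStep Had (atOrigin v))) = fun c x =>
      if c = 0 then
        (if x = 3 then (v 0 + v 1) / 2 else if x = 1 then (v 0 - v 1) / 2 else 0)
      else
        (if x = -1 then (v 0 + v 1) / 2 else if x = -3 then -((v 0 - v 1) / 2) else 0) := by
  ext c x
  fin_cases c <;>
    simp [walkStep, coinOp_apply, Had_eq, atOrigin, mul_add, ← mul_assoc, inv_sqrt_two_mul_self] <;>
    split_ifs <;> first | omega | ring

lemma reducedCoinState_walkStep_one_Had_Had_atOrigin (v : Fin 2 → ℂ) :
    reducedCoinState (walkStep 1 (walkStep Had (walkStep Had (atOrigin v)))) =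
      (((‖v 0‖ ^ 2 + ‖v 1‖ ^ 2 : ℝ) : ℂ) / 2) • 1 := by
  rw [walkStep_one_Had_Had_atOrigin]
  ext c c'
  rw [reducedCoinState, tsum_eq_sum (s := {-3, -1, 1, 3})]
  · fin_cases c <;> fin_cases c' <;> simp [map_ofNat, ← Complex.mul_conj'] <;> ring
  · intro x hx
    simp only [Finset.mem_insert, Finset.mem_singleton, not_or] at hx
    fin_cases c <;> simp [hx]

lemma initState_eq_atOrigin (θ φ : ℝ) :
    initState θ φ =
      atOrigin ![(Real.cos (θ / 2) : ℂ), Complex.exp (Complex.I * φ) * (Real.sin (θ / 2) : ℂ)] := by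
  ext c x
  fin_cases c <;> rfl

lemma norm_cos_sq_add_norm_exp_mul_sin_sq (θ φ : ℝ) :
    ‖(Real.cos θ : ℂ)‖ ^ 2 + ‖Complex.exp (Complex.I * φ) * (Real.sin θ : ℂ)‖ ^ 2 = 1 := by
  rw [norm_mul, mul_comm Complex.I, Complex.norm_exp_ofReal_mul_I, one_mul, Complex.norm_real,
    Complex.norm_real, Real.norm_eq_abs, Real.norm_eq_abs, sq_abs, sq_abs, Real.cos_sq_add_sin_sq]

theorem HH1_maximal_entanglement (θ φ : ℝ) :
    (fun c c' : Fin 2 =>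
        ∑' x : ℤ,
          (shiftOp (coinOp 1 (shiftOp (coinOp Had (shiftOp (coinOp Had (initState θ φ))))))) c x
            * (starRingEnd ℂ)
              ((shiftOp (coinOp 1 (shiftOp (coinOp Had (shiftOp (coinOp Had (initState θ φ))))))) c' x))
      = fun c c' => ((1 / 2 : ℂ) • (1 : Matrix (Fin 2) (Fin 2) ℂ)) c c' := by
  show reducedCoinState (walkStep 1 (walkStep Had (walkStep Had (initState θ φ)))) =
    (1 / 2 : ℂ) • 1
  have h := reducedCoinState_walkStep_one_Had_Had_atOrigin
    ![(Real.cos (θ / 2) : ℂ), Complex.exp (Complex.I * φ) * (Real.sin (θ / 2) : ℂ)]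
  rw [← initState_eq_atOrigin, Matrix.cons_val_zero, Matrix.cons_val_one, Matrix.cons_val_zero,
    norm_cos_sq_add_norm_exp_mul_sin_sq, Complex.ofReal_one] at h
  exact h
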